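/- arXiv:1405.0712 — 4 statements merged into one kernel-verified Lean document; each statement's English description precedes it below -/
import Mathlib

section
/- Under the linear time-dependent deterioration model p_{[j]} = a_{[j]} + b·S_{[j]}, where S_{[j]} is the starting time of the job in position j and jobs are processed consecutively from time 0 with no interruption, the actual processing time of the job in position j satisfies p_{[j]} = a_{[j]} + b·Σ_{t=1}^{j−1} (1+b)^{t−1} a_{[j−t]}. -/
/-! Since `p j = a j + b S j`, the starting times satisfy the first-order linear recurrence
`S (j+1) = (1+b) S j + a j` with `S 1 = 0`, whose solution is the geometric convolution
`S j = ∑_{t=1}^{j-1} (1+b)^(t-1) a (j-t)`; substituting it into `p j = a j + b S j` gives the claim. -/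

open Finset

theorem eq_sum_range_pow_mul_of_eq_mul_add {R : Type*} [CommSemiring R] {x f : ℕ → R} {c : R}
    (h0 : x 0 = 0) (hsucc : ∀ k, x (k + 1) = c * x k + f (k + 1)) (k : ℕ) :
    x k = ∑ i ∈ range k, c ^ i * f (k - i) := by
  induction k with
  | zero => simp [h0]
  | succ k ih =>
    rw [hsucc, ih, sum_range_succ', mul_sum]
    simp only [pow_succ', mul_assoc, Nat.add_sub_add_right, pow_zero, one_mul, Nat.sub_zero]

theorem sum_Icc_one_eq_sum_range {M : Type*} [AddCommMonoid M] (g : ℕ → M) (m : ℕ) :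
    ∑ t ∈ Icc 1 m, g t = ∑ i ∈ range m, g (i + 1) := by
  rw [← Ico_add_one_right_eq_Icc, sum_Ico_eq_sum_range, Nat.add_sub_cancel]
  simp only [add_comm]

theorem start_time_eq_sum {R : Type*} [CommSemiring R] {a p S : ℕ → R} {b : R} (hS1 : S 1 = 0)
    (hSrec : ∀ j, 2 ≤ j → S j = S (j - 1) + p (j - 1)) (hp : ∀ j, p j = a j + b * S j)
    {j : ℕ} (hj : 1 ≤ j) :
    S j = ∑ t ∈ Icc 1 (j - 1), (1 + b) ^ (t - 1) * a (j - t) := by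
  obtain ⟨m, rfl⟩ : ∃ m, j = m + 1 := ⟨j - 1, by omega⟩
  have hrec : ∀ k, S (k + 1 + 1) = (1 + b) * S (k + 1) + a (k + 1) := fun k => by
    rw [hSrec (k + 1 + 1) (by omega), Nat.add_sub_cancel, hp]
    ring
  rw [eq_sum_range_pow_mul_of_eq_mul_add (x := fun k => S (k + 1)) hS1 hrec m, Nat.add_sub_cancel,
    sum_Icc_one_eq_sum_range]
  simp only [Nat.add_sub_cancel, Nat.add_sub_add_right]

theorem stmt_6_general (n : ℕ) (a p S : ℕ → ℝ) (b : ℝ)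
    (hS1 : S 1 = 0)
    (hSrec : ∀ j, 2 ≤ j → S j = S (j - 1) + p (j - 1))
    (hp : ∀ j, p j = a j + b * S j) :
    ∀ j, 1 ≤ j → j ≤ n →
      p j = a j + b * ∑ t ∈ Finset.Icc 1 (j - 1), (1 + b) ^ (t - 1) * a (j - t) := by
  intro j hj _
  rw [hp j, start_time_eq_sum hS1 hSrec hp hj]

/-- Under the linear time-dependent deterioration model with consecutive
processing from time `0`, the actual processing time of the job in position `j`
is `p j = a j + b ∑_{t=1}^{j-1} (1+b)^(t-1) a (j-t)`. -/
theorem stmt_6 (n : ℕ) (a p S : ℕ → ℝ) (b : ℝ) (hb : 0 < b)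
    (ha : ∀ j, 1 ≤ j → j ≤ n → 0 < a j)
    (hS1 : S 1 = 0)
    (hSrec : ∀ j, 2 ≤ j → S j = S (j - 1) + p (j - 1))
    (hp : ∀ j, p j = a j + b * S j) :
    ∀ j, 1 ≤ j → j ≤ n →
      p j = a j + b * ∑ t ∈ Finset.Icc 1 (j - 1), (1 + b) ^ (t - 1) * a (j - t) :=
  stmt_6_general n a p S b hS1 hSrec hp
end

section
/- For any weights ω_1,...,ω_n and processing times given by p_{[j]} = a_{[j]} + b·Σ_{t=1}^{j−1}(1+b)^{t−1} a_{[j−t]}, one has Σ_{j=1}^n ω_j p_{[j]} = Σ_{j=1}^n W_j a_{[j]}, where W_j = ω_j + b·Σ_{t=j+1}^n ω_t (1+b)^{t−j−1}. -/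
/-! Substituting the formula for `p j`, the weighted sum splits into `∑ ω j a j` plus `b` times
a convolution-type double sum over `1 ≤ k < j ≤ n`; reflecting the inner index (`t ↦ j - t`) and
exchanging the order of summation turns that double sum into `∑ k, (∑ j > k, ω j (1 + b)^(j-k-1)) a k`,
which is exactly the `b`-part of `∑ W k a k`. -/

open Finset

theorem sum_Icc_one_pred_reflect {M : Type*} [AddCommMonoid M] (j : ℕ) (f : ℕ → M) :
    ∑ t ∈ Icc 1 (j - 1), f t = ∑ k ∈ Icc 1 (j - 1), f (j - k) := by
  refine sum_nbij' (j - ·) (j - ·) ?_ ?_ ?_ ?_ ?_ <;> intro t ht <;> simp only [mem_Icc] at ht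
  · simp only [mem_Icc]; omega
  · simp only [mem_Icc]; omega
  · omega
  · omega
  · simp only [show j - (j - t) = t by omega]

theorem sum_Icc_sum_Icc_one_pred_comm {M : Type*} [AddCommMonoid M] (n : ℕ) (F : ℕ → ℕ → M) :
    ∑ j ∈ Icc 1 n, ∑ k ∈ Icc 1 (j - 1), F j k = ∑ k ∈ Icc 1 n, ∑ j ∈ Icc (k + 1) n, F j k :=
  sum_comm' fun j k => by simp only [mem_Icc]; omega

theorem sum_mul_sum_Icc_convolution {R : Type*} [CommSemiring R] (n : ℕ) (ω c a : ℕ → R) :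
    ∑ j ∈ Icc 1 n, ω j * ∑ t ∈ Icc 1 (j - 1), c t * a (j - t)
      = ∑ k ∈ Icc 1 n, (∑ j ∈ Icc (k + 1) n, ω j * c (j - k)) * a k := by
  calc ∑ j ∈ Icc 1 n, ω j * ∑ t ∈ Icc 1 (j - 1), c t * a (j - t)
      = ∑ j ∈ Icc 1 n, ∑ k ∈ Icc 1 (j - 1), ω j * c (j - k) * a k := by
        refine sum_congr rfl fun j _ => ?_
        rw [sum_Icc_one_pred_reflect j, mul_sum]
        refine sum_congr rfl fun k hk => ?_
        rw [mem_Icc] at hk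
        rw [show j - (j - k) = k by omega, mul_assoc]
    _ = ∑ k ∈ Icc 1 n, (∑ j ∈ Icc (k + 1) n, ω j * c (j - k)) * a k := by
        simp only [sum_Icc_sum_Icc_one_pred_comm, sum_mul]

theorem stmt_8_general (n : ℕ) (a p ω W : ℕ → ℝ) (b : ℝ)
    (hp : ∀ j, 1 ≤ j → j ≤ n →
      p j = a j + b * ∑ t ∈ Finset.Icc 1 (j - 1), (1 + b) ^ (t - 1) * a (j - t))
    (hW : ∀ j, 1 ≤ j → j ≤ n →
      W j = ω j + b * ∑ t ∈ Finset.Icc (j + 1) n, ω t * (1 + b) ^ (t - j - 1)) :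
    ∑ j ∈ Finset.Icc 1 n, ω j * p j = ∑ j ∈ Finset.Icc 1 n, W j * a j := by
  have hconv := sum_mul_sum_Icc_convolution n ω (fun t => (1 + b) ^ (t - 1)) a
  simp only [Nat.sub_sub] at hconv
  calc ∑ j ∈ Icc 1 n, ω j * p j
      = ∑ j ∈ Icc 1 n, ω j * a j
          + b * ∑ j ∈ Icc 1 n, ω j * ∑ t ∈ Icc 1 (j - 1), (1 + b) ^ (t - 1) * a (j - t) := by
        rw [mul_sum, ← sum_add_distrib]
        refine sum_congr rfl fun j hj => ?_
        rw [mem_Icc] at hj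
        rw [hp j hj.1 hj.2]
        ring
    _ = ∑ j ∈ Icc 1 n, W j * a j := by
        rw [hconv, mul_sum, ← sum_add_distrib]
        refine sum_congr rfl fun k hk => ?_
        rw [mem_Icc] at hk
        rw [hW k hk.1 hk.2]
        simp only [Nat.sub_sub]
        ring

/-- Exchanging the order of summation converts job-position weights `ω j` on
actual processing times into positional weights `W j` on normal processing
times. -/
theorem stmt_8 (n : ℕ) (a p ω W : ℕ → ℝ) (b : ℝ) (hb : 0 < b)
    (hp : ∀ j, 1 ≤ j → j ≤ n →
      p j = a j + b * ∑ t ∈ Finset.Icc 1 (j - 1), (1 + b) ^ (t - 1) * a (j - t))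
    (hW : ∀ j, 1 ≤ j → j ≤ n →
      W j = ω j + b * ∑ t ∈ Finset.Icc (j + 1) n, ω t * (1 + b) ^ (t - j - 1)) :
    ∑ j ∈ Finset.Icc 1 n, ω j * p j = ∑ j ∈ Finset.Icc 1 n, W j * a j :=
  stmt_8_general n a p ω W b hp hW
end

section
/- With the weights ω_j defined piecewise for the case i < k (ω_j = αj + αiσ + γnσ + (n+1)γ for 1 ≤ j ≤ i; ω_j = αj + (n+1)γ for i < j ≤ k; ω_j = γ + nδ for k < j ≤ l; ω_j = β(n−j) + γ for l < j ≤ n), the total cost satisfies Z = nμγ + αiμ + Σ_{j=1}^n ω_j p_{[j]}, where Z = α·Σ_{j=1}^k (q^(1) + p_{[j]} − C_{[j]}) + β·Σ_{j=l+1}^n (C_{[j]} − p_{[j]} − q^(2)) + γ·Σ_{j=1}^n (q^(1) + p_{[j]}) + nδ(q^(2) − q^(1)), with q^(1) = μ + σΣ_{j=1}^i p_{[j]} + Σ_{j=1}^k p_{[j]} and q^(2) = μ + σΣ_{j=1}^i p_{[j]} + Σ_{j=1}^l p_{[j]}, and C_{[j]} = Σ_{t=1}^j p_{[t]} + (μ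 + σΣ_{t=1}^i p_{[t]}) for j > i, C_{[j]} = Σ_{t=1}^j p_{[t]} for j ≤ i. -/
open Finset

lemma splitIcc (f : ℕ → ℝ) (a b c : ℕ) (hab : a ≤ b) (hbc : b ≤ c) :
    ∑ j ∈ Icc (a+1) b, f j + ∑ j ∈ Icc (b+1) c, f j = ∑ j ∈ Icc (a+1) c, f j := by
  rw [Finset.Icc_add_one_left_eq_Ioc, Finset.Icc_add_one_left_eq_Ioc, Finset.Icc_add_one_left_eq_Ioc]
  exact Finset.sum_Ioc_consecutive f hab hbc

lemma lemA (p : ℕ → ℝ) (k : ℕ) :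
    ∑ j ∈ Icc 1 k, (∑ t ∈ Icc 1 k, p t + p j - ∑ t ∈ Icc 1 j, p t)
      = ∑ j ∈ Icc 1 k, (j : ℝ) * p j := by
  induction k with
  | zero => simp
  | succ k ih =>
    have hk1 : 1 ≤ k + 1 := Nat.le_add_left 1 k
    rw [Finset.sum_Icc_succ_top hk1, Finset.sum_Icc_succ_top hk1 p,
        Finset.sum_Icc_succ_top hk1]
    have h1 : ∑ j ∈ Icc 1 k, (∑ t ∈ Icc 1 k, p t + p (k+1) + p j - ∑ t ∈ Icc 1 j, p t)
        = ∑ j ∈ Icc 1 k, ((∑ t ∈ Icc 1 k, p t + p j - ∑ t ∈ Icc 1 j, p t) + p (k+1)) :=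
      Finset.sum_congr rfl (fun j _ => by ring)
    rw [h1, Finset.sum_add_distrib, Finset.sum_const, Nat.card_Icc, ih]
    simp only [Nat.add_sub_cancel, nsmul_eq_mul]
    push_cast
    ring

lemma lemB (p : ℕ → ℝ) (l : ℕ) : ∀ m, l ≤ m →
    ∑ j ∈ Icc (l+1) m, (∑ t ∈ Icc 1 j, p t - p j - ∑ t ∈ Icc 1 l, p t)
      = ∑ j ∈ Icc (l+1) m, ((m : ℝ) - j) * p j := by
  intro m hm
  induction m, hm using Nat.le_induction with
  | base => simp
  | succ m hm ih =>
    have hl1 : l + 1 ≤ m + 1 := Nat.succ_le_succ hm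
    rw [Finset.sum_Icc_succ_top hl1, Finset.sum_Icc_succ_top hl1]
    have hT : ∑ t ∈ Icc 1 (m+1), p t = ∑ t ∈ Icc 1 m, p t + p (m+1) :=
      Finset.sum_Icc_succ_top (Nat.le_add_left 1 m) p
    have hTm : ∑ t ∈ Icc 1 m, p t - ∑ t ∈ Icc 1 l, p t = ∑ t ∈ Icc (l+1) m, p t := by
      have := splitIcc p 0 l m (Nat.zero_le l) hm
      simp only [Nat.zero_add] at this
      linarith
    have h2 : ∑ j ∈ Icc (l+1) m, ((m : ℝ) + 1 - j) * p j
        = ∑ j ∈ Icc (l+1) m, (((m : ℝ) - j) * p j + p j) :=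
      Finset.sum_congr rfl (fun j _ => by ring)
    push_cast
    rw [h2, Finset.sum_add_distrib, ih, hT]
    rw [← hTm]
    ring

/-- Cost decomposition for the case `i < k`: with maintenance after position
`i`, the total cost equals `n μ γ + α i μ + ∑ ω j * p j`. -/
theorem stmt_12 (n k l i : ℕ) (hi1 : 1 ≤ i) (hik : i < k) (hkl : k ≤ l)
    (hln : l ≤ n)
    (α β γ δ μ σ : ℝ) (hα : 0 < α) (hβ : 0 < β) (hγ : 0 < γ) (hδ : 0 < δ)
    (hμ : 0 < μ) (hσ : 0 ≤ σ)
    (p C ω : ℕ → ℝ) (hp : ∀ j, 1 ≤ j → j ≤ n → 0 < p j)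
    (q1 q2 Z : ℝ)
    (hC1 : ∀ j, j ≤ i → C j = ∑ t ∈ Finset.Icc 1 j, p t)
    (hC2 : ∀ j, i < j → j ≤ n →
      C j = ∑ t ∈ Finset.Icc 1 j, p t + (μ + σ * ∑ t ∈ Finset.Icc 1 i, p t))
    (hq1 : q1 = μ + σ * ∑ j ∈ Finset.Icc 1 i, p j + ∑ j ∈ Finset.Icc 1 k, p j)
    (hq2 : q2 = μ + σ * ∑ j ∈ Finset.Icc 1 i, p j + ∑ j ∈ Finset.Icc 1 l, p j)
    (hω1 : ∀ j, 1 ≤ j → j ≤ i →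
      ω j = α * j + α * i * σ + γ * n * σ + (n + 1) * γ)
    (hω2 : ∀ j, i < j → j ≤ k → ω j = α * j + (n + 1) * γ)
    (hω3 : ∀ j, k < j → j ≤ l → ω j = γ + n * δ)
    (hω4 : ∀ j, l < j → j ≤ n → ω j = β * ((n : ℝ) - j) + γ)
    (hZ : Z = α * ∑ j ∈ Finset.Icc 1 k, (q1 + p j - C j) +
      β * ∑ j ∈ Finset.Icc (l + 1) n, (C j - p j - q2) +
      γ * ∑ j ∈ Finset.Icc 1 n, (q1 + p j) + n * δ * (q2 - q1)) :
    Z = n * μ * γ + α * i * μ + ∑ j ∈ Finset.Icc 1 n, ω j * p j := by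
  have hkn : k ≤ n := hkl.trans hln
  have hin : i ≤ n := hik.le.trans hkn
  -- abbreviations
  set Ti := ∑ t ∈ Icc 1 i, p t with hTi
  set Tk := ∑ t ∈ Icc 1 k, p t with hTk
  set Tl := ∑ t ∈ Icc 1 l, p t with hTl
  set Tn := ∑ t ∈ Icc 1 n, p t with hTn
  -- Step 1 : first sum
  have h1 : ∑ j ∈ Icc 1 k, (q1 + p j - C j)
      = (i : ℝ) * (μ + σ * Ti) + ∑ j ∈ Icc 1 k, (j : ℝ) * p j := by
    have e1 := splitIcc (fun j => q1 + p j - C j) 0 i k (Nat.zero_le i) hik.le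
    simp only [Nat.zero_add] at e1
    rw [← e1]
    have e2 : ∑ j ∈ Icc 1 i, (q1 + p j - C j)
        = ∑ j ∈ Icc 1 i, ((μ + σ * Ti) + (Tk + p j - ∑ t ∈ Icc 1 j, p t)) := by
      refine Finset.sum_congr rfl (fun j hj => ?_)
      rw [Finset.mem_Icc] at hj
      rw [hC1 j hj.2, hq1]; ring
    have e3 : ∑ j ∈ Icc (i+1) k, (q1 + p j - C j)
        = ∑ j ∈ Icc (i+1) k, (Tk + p j - ∑ t ∈ Icc 1 j, p t) := by
      refine Finset.sum_congr rfl (fun j hj => ?_)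
      rw [Finset.mem_Icc] at hj
      rw [hC2 j hj.1 (hj.2.trans hkn), hq1]; ring
    rw [e2, e3, Finset.sum_add_distrib, Finset.sum_const, Nat.card_Icc,
        Nat.add_sub_cancel, nsmul_eq_mul]
    have e4 := splitIcc (fun j => Tk + p j - ∑ t ∈ Icc 1 j, p t) 0 i k (Nat.zero_le i) hik.le
    simp only [Nat.zero_add] at e4
    rw [add_assoc, e4, lemA p k]
  -- Step 2 : second sum
  have h2 : ∑ j ∈ Icc (l+1) n, (C j - p j - q2)
      = ∑ j ∈ Icc (l+1) n, ((n : ℝ) - j) * p j := by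
    have e2 : ∑ j ∈ Icc (l+1) n, (C j - p j - q2)
        = ∑ j ∈ Icc (l+1) n, (∑ t ∈ Icc 1 j, p t - p j - Tl) := by
      refine Finset.sum_congr rfl (fun j hj => ?_)
      rw [Finset.mem_Icc] at hj
      have hij : i < j := lt_of_lt_of_le hik (hkl.trans (Nat.le_of_succ_le hj.1))
      rw [hC2 j hij hj.2, hq2]; ring
    rw [e2, lemB p l n hln]
  -- Step 3 : third sum
  have h3 : ∑ j ∈ Icc 1 n, (q1 + p j) = (n : ℝ) * q1 + Tn := by
    rw [Finset.sum_add_distrib, Finset.sum_const, Nat.card_Icc, Nat.add_sub_cancel,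
        nsmul_eq_mul, hTn]
  -- RHS decomposition
  have r1 := splitIcc (fun j => ω j * p j) 0 i n (Nat.zero_le i) hin
  have r2 := splitIcc (fun j => ω j * p j) i k n hik.le hkn
  have r3 := splitIcc (fun j => ω j * p j) k l n hkl hln
  simp only [Nat.zero_add] at r1
  have hR : ∑ j ∈ Icc 1 n, ω j * p j
      = ∑ j ∈ Icc 1 i, ω j * p j + ∑ j ∈ Icc (i+1) k, ω j * p j
        + ∑ j ∈ Icc (k+1) l, ω j * p j + ∑ j ∈ Icc (l+1) n, ω j * p j := by
    rw [add_assoc, add_assoc, r3, r2, r1]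
  have hR1 : ∑ j ∈ Icc 1 i, ω j * p j
      = α * ∑ j ∈ Icc 1 i, (j : ℝ) * p j + (α * i * σ + γ * n * σ + (n + 1) * γ) * Ti := by
    have : ∑ j ∈ Icc 1 i, ω j * p j
        = ∑ j ∈ Icc 1 i, (α * ((j : ℝ) * p j) + (α * i * σ + γ * n * σ + (n + 1) * γ) * p j) := by
      refine Finset.sum_congr rfl (fun j hj => ?_)
      rw [Finset.mem_Icc] at hj
      rw [hω1 j hj.1 hj.2]; ring
    rw [this, Finset.sum_add_distrib, ← Finset.mul_sum, ← Finset.mul_sum, hTi]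
  have hR2 : ∑ j ∈ Icc (i+1) k, ω j * p j
      = α * ∑ j ∈ Icc (i+1) k, (j : ℝ) * p j + ((n : ℝ) + 1) * γ * ∑ j ∈ Icc (i+1) k, p j := by
    have : ∑ j ∈ Icc (i+1) k, ω j * p j
        = ∑ j ∈ Icc (i+1) k, (α * ((j : ℝ) * p j) + ((n : ℝ) + 1) * γ * p j) := by
      refine Finset.sum_congr rfl (fun j hj => ?_)
      rw [Finset.mem_Icc] at hj
      rw [hω2 j hj.1 hj.2]; ring
    rw [this, Finset.sum_add_distrib, ← Finset.mul_sum, ← Finset.mul_sum]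
  have hR3 : ∑ j ∈ Icc (k+1) l, ω j * p j = (γ + n * δ) * ∑ j ∈ Icc (k+1) l, p j := by
    rw [Finset.mul_sum]
    refine Finset.sum_congr rfl (fun j hj => ?_)
    rw [Finset.mem_Icc] at hj
    rw [hω3 j hj.1 hj.2]
  have hR4 : ∑ j ∈ Icc (l+1) n, ω j * p j
      = β * ∑ j ∈ Icc (l+1) n, ((n : ℝ) - j) * p j + γ * ∑ j ∈ Icc (l+1) n, p j := by
    have : ∑ j ∈ Icc (l+1) n, ω j * p j
        = ∑ j ∈ Icc (l+1) n, (β * (((n : ℝ) - j) * p j) + γ * p j) := by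
      refine Finset.sum_congr rfl (fun j hj => ?_)
      rw [Finset.mem_Icc] at hj
      rw [hω4 j hj.1 hj.2]; ring
    rw [this, Finset.sum_add_distrib, ← Finset.mul_sum, ← Finset.mul_sum]
  -- segment sums as differences
  have hPik : ∑ j ∈ Icc (i+1) k, p j = Tk - Ti := by
    have := splitIcc p 0 i k (Nat.zero_le i) hik.le
    simp only [Nat.zero_add] at this
    rw [hTk, hTi]; linarith
  have hPkl : ∑ j ∈ Icc (k+1) l, p j = Tl - Tk := by
    have := splitIcc p 0 k l (Nat.zero_le k) hkl
    simp only [Nat.zero_add] at this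
    rw [hTl, hTk]; linarith
  have hPln : ∑ j ∈ Icc (l+1) n, p j = Tn - Tl := by
    have := splitIcc p 0 l n (Nat.zero_le l) hln
    simp only [Nat.zero_add] at this
    rw [hTn, hTl]; linarith
  have hJ : ∑ j ∈ Icc (i+1) k, (j : ℝ) * p j
      = ∑ j ∈ Icc 1 k, (j : ℝ) * p j - ∑ j ∈ Icc 1 i, (j : ℝ) * p j := by
    have := splitIcc (fun j => (j : ℝ) * p j) 0 i k (Nat.zero_le i) hik.le
    simp only [Nat.zero_add] at this
    linarith
  rw [hZ, h1, h2, h3, hR, hR1, hR2, hR3, hR4, hPik, hPkl, hPln, hJ, hq1, hq2, hTi, hTk, hTl]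
  ring
end

section
/- With the weights ω_j defined for the case k ≤ i < l (ω_j = αj + γ(n+1) + nδσ for 1 ≤ j ≤ k; ω_j = γ + nδσ + nδ for k < j ≤ i; ω_j = γ + nδ for i < j ≤ l; ω_j = β(n−j) + γ for l < j ≤ n), the total cost Z equals nδμ + Σ_{j=1}^n ω_j p_{[j]}, where q^(1) = Σ_{j=1}^k p_{[j]}, q^(2) = Σ_{j=1}^l p_{[j]} + μ + σΣ_{j=1}^i p_{[j]}, C_{[j]} = Σ_{t=1}^j p_{[t]} for j ≤ i and C_{[j]} = Σ_{t=1}^j p_{[t]} + μ + σΣ_{t=1}^i p_{[t]} for j > i, and Z = α·Σ_{j=1}^k (q^(1) + p_{[j]} − C_{[j]}) + β·Σ_{j=l+1}^n (C_{[j]} − p_{[j]} − q^(2)) + γ·Σ_{j=1}^n (q^(1) + p_{[j]}) + nδ(q^(2) − q^(1)). -/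
/-!
Every term of the cost is linear in the processing times, so it suffices to compute the
coefficient of each `p j`. The only non-trivial bookkeeping is in the two double sums: exchanging
the order of summation, the early-job term `∑_{j ≤ k} (q1 + p j - C j) = ∑_{j ≤ k} ∑_{j ≤ t ≤ k} p t`
becomes `∑_{j ≤ k} j * p j`, and the late-job term `∑_{l < j ≤ n} ∑_{l < t < j} p t` becomes
`∑_{l < j ≤ n} (n - j) * p j`; the maintenance offsets in `C j` and `q2` cancel there.
-/

open Finset

theorem sum_Ioc_split_four {M : Type*} [AddCommMonoid M] {a b c d e : ℕ} (f : ℕ → M)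
    (hab : a ≤ b) (hbc : b ≤ c) (hcd : c ≤ d) (hde : d ≤ e) :
    ∑ j ∈ Ioc a e, f j
      = ∑ j ∈ Ioc a b, f j + ∑ j ∈ Ioc b c, f j + ∑ j ∈ Ioc c d, f j + ∑ j ∈ Ioc d e, f j := by
  rw [sum_Ioc_consecutive f hab hbc, sum_Ioc_consecutive f (hab.trans hbc) hcd,
    sum_Ioc_consecutive f ((hab.trans hbc).trans hcd) hde]

section

variable {R : Type*} [Ring R]

theorem sum_Ioc_sum_Icc_eq (p : ℕ → R) (a b : ℕ) :
    ∑ j ∈ Ioc a b, ∑ t ∈ Icc j b, p t = ∑ t ∈ Ioc a b, ((t : R) - a) * p t := by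
  rw [sum_comm' (t' := Ioc a b) (s' := fun t => Ioc a t) (fun j t => by
    simp only [mem_Ioc, mem_Icc]; omega)]
  refine sum_congr rfl fun t ht => ?_
  rw [sum_const, Nat.card_Ioc, nsmul_eq_mul, Nat.cast_sub (mem_Ioc.1 ht).1.le]

theorem sum_Ioc_sum_Ioo_eq (p : ℕ → R) (a b : ℕ) :
    ∑ j ∈ Ioc a b, ∑ t ∈ Ioo a j, p t = ∑ t ∈ Ioc a b, ((b : R) - t) * p t := by
  rw [sum_comm' (t' := Ioc a b) (s' := fun t => Ioc t b) (fun j t => by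
    simp only [mem_Ioc, mem_Ioo]; omega)]
  refine sum_congr rfl fun t ht => ?_
  rw [sum_const, Nat.card_Ioc, nsmul_eq_mul, Nat.cast_sub (mem_Ioc.1 ht).2]

theorem sum_Ioc_add_sub_partial_sum (p : ℕ → R) (a b : ℕ) :
    ∑ j ∈ Ioc a b, (∑ t ∈ Ioc a b, p t + p j - ∑ t ∈ Ioc a j, p t)
      = ∑ j ∈ Ioc a b, ((j : R) - a) * p j := by
  rw [← sum_Ioc_sum_Icc_eq]
  refine sum_congr rfl fun j hj => ?_
  obtain ⟨haj, hjb⟩ := mem_Ioc.1 hj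
  rw [← sum_Ioc_consecutive p haj.le hjb, Icc_eq_cons_Ioc hjb, sum_cons]
  abel

theorem sum_Ioc_partial_sum_sub {c a : ℕ} (p : ℕ → R) (hca : c ≤ a) (b : ℕ) :
    ∑ j ∈ Ioc a b, (∑ t ∈ Ioc c j, p t - p j - ∑ t ∈ Ioc c a, p t)
      = ∑ j ∈ Ioc a b, ((b : R) - j) * p j := by
  rw [← sum_Ioc_sum_Ioo_eq]
  refine sum_congr rfl fun j hj => ?_
  obtain ⟨haj, -⟩ := mem_Ioc.1 hj
  rw [← sum_Ioc_consecutive p hca haj.le, Ioc_eq_cons_Ioo haj, sum_cons]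
  abel

end

theorem stmt_13_general (n k l i : ℕ) (hki : k ≤ i) (hil : i < l)
    (hln : l ≤ n)
    (α β γ δ μ σ : ℝ)
    (p C ω : ℕ → ℝ)
    (q1 q2 Z : ℝ)
    (hC1 : ∀ j, j ≤ i → C j = ∑ t ∈ Finset.Icc 1 j, p t)
    (hC2 : ∀ j, i < j → j ≤ n →
      C j = ∑ t ∈ Finset.Icc 1 j, p t + (μ + σ * ∑ t ∈ Finset.Icc 1 i, p t))
    (hq1 : q1 = ∑ j ∈ Finset.Icc 1 k, p j)
    (hq2 : q2 = ∑ j ∈ Finset.Icc 1 l, p j + μ + σ * ∑ j ∈ Finset.Icc 1 i, p j)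
    (hω1 : ∀ j, 1 ≤ j → j ≤ k → ω j = α * j + γ * (n + 1) + n * δ * σ)
    (hω2 : ∀ j, k < j → j ≤ i → ω j = γ + n * δ * σ + n * δ)
    (hω3 : ∀ j, i < j → j ≤ l → ω j = γ + n * δ)
    (hω4 : ∀ j, l < j → j ≤ n → ω j = β * ((n : ℝ) - j) + γ)
    (hZ : Z = α * ∑ j ∈ Finset.Icc 1 k, (q1 + p j - C j) +
      β * ∑ j ∈ Finset.Icc (l + 1) n, (C j - p j - q2) +
      γ * ∑ j ∈ Finset.Icc 1 n, (q1 + p j) + n * δ * (q2 - q1)) :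
    Z = n * δ * μ + ∑ j ∈ Finset.Icc 1 n, ω j * p j := by
  have Icc_one : ∀ m, Icc 1 m = Ioc 0 m := Icc_add_one_left_eq_Ioc 0
  simp only [Icc_one, Icc_add_one_left_eq_Ioc] at hZ hq1 hq2 hC1 hC2 ⊢
  have early : ∑ j ∈ Ioc 0 k, (q1 + p j - C j) = ∑ j ∈ Ioc 0 k, (j : ℝ) * p j := by
    refine (sum_congr rfl fun j hj => ?_).trans ((sum_Ioc_add_sub_partial_sum p 0 k).trans ?_)
    · rw [hC1 j ((mem_Ioc.1 hj).2.trans hki), hq1]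
    · simp only [Nat.cast_zero, sub_zero]
  have late : ∑ j ∈ Ioc l n, (C j - p j - q2) = ∑ j ∈ Ioc l n, ((n : ℝ) - j) * p j := by
    refine (sum_congr rfl fun j hj => ?_).trans (sum_Ioc_partial_sum_sub p l.zero_le n)
    obtain ⟨hlj, hjn⟩ := mem_Ioc.1 hj
    rw [hC2 j (hil.trans hlj) hjn, hq2]
    ring
  have weights : ∑ j ∈ Ioc 0 n, ω j * p j =
      ∑ j ∈ Ioc 0 k, (α * j + γ * (n + 1) + n * δ * σ) * p j
      + ∑ j ∈ Ioc k i, (γ + n * δ * σ + n * δ) * p j + ∑ j ∈ Ioc i l, (γ + n * δ) * p j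
      + ∑ j ∈ Ioc l n, (β * ((n : ℝ) - j) + γ) * p j := by
    rw [sum_Ioc_split_four _ k.zero_le hki hil.le hln]
    refine congr_arg₂ (· + ·) (congr_arg₂ (· + ·) (congr_arg₂ (· + ·) ?_ ?_) ?_) ?_ <;>
      refine sum_congr rfl fun j hj => ?_ <;> obtain ⟨hj₁, hj₂⟩ := mem_Ioc.1 hj
    · rw [hω1 j hj₁ hj₂]
    · rw [hω2 j hj₁ hj₂]
    · rw [hω3 j hj₁ hj₂]
    · rw [hω4 j hj₁ hj₂]
  rw [hZ, early, late, weights, hq2, hq1, sum_add_distrib, sum_const, Nat.card_Ioc, Nat.sub_zero,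
    sum_Ioc_split_four p k.zero_le hki hil.le hln,
    ← sum_Ioc_consecutive p i.zero_le hil.le, ← sum_Ioc_consecutive p k.zero_le hki]
  simp only [add_mul, mul_assoc, sum_add_distrib, ← mul_sum, nsmul_eq_mul]
  ring

/-- Cost decomposition for the case `k ≤ i < l`: with maintenance after
position `i`, the total cost equals `n δ μ + ∑ ω j * p j`. -/
theorem stmt_13 (n k l i : ℕ) (hk1 : 1 ≤ k) (hki : k ≤ i) (hil : i < l)
    (hln : l ≤ n)
    (α β γ δ μ σ : ℝ) (hα : 0 < α) (hβ : 0 < β) (hγ : 0 < γ) (hδ : 0 < δ)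
    (hμ : 0 < μ) (hσ : 0 ≤ σ)
    (p C ω : ℕ → ℝ) (hp : ∀ j, 1 ≤ j → j ≤ n → 0 < p j)
    (q1 q2 Z : ℝ)
    (hC1 : ∀ j, j ≤ i → C j = ∑ t ∈ Finset.Icc 1 j, p t)
    (hC2 : ∀ j, i < j → j ≤ n →
      C j = ∑ t ∈ Finset.Icc 1 j, p t + (μ + σ * ∑ t ∈ Finset.Icc 1 i, p t))
    (hq1 : q1 = ∑ j ∈ Finset.Icc 1 k, p j)
    (hq2 : q2 = ∑ j ∈ Finset.Icc 1 l, p j + μ + σ * ∑ j ∈ Finset.Icc 1 i, p j)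
    (hω1 : ∀ j, 1 ≤ j → j ≤ k → ω j = α * j + γ * (n + 1) + n * δ * σ)
    (hω2 : ∀ j, k < j → j ≤ i → ω j = γ + n * δ * σ + n * δ)
    (hω3 : ∀ j, i < j → j ≤ l → ω j = γ + n * δ)
    (hω4 : ∀ j, l < j → j ≤ n → ω j = β * ((n : ℝ) - j) + γ)
    (hZ : Z = α * ∑ j ∈ Finset.Icc 1 k, (q1 + p j - C j) +
      β * ∑ j ∈ Finset.Icc (l + 1) n, (C j - p j - q2) +
      γ * ∑ j ∈ Finset.Icc 1 n, (q1 + p j) + n * δ * (q2 - q1)) :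
    Z = n * δ * μ + ∑ j ∈ Finset.Icc 1 n, ω j * p j :=
  stmt_13_general n k l i hki hil hln α β γ δ μ σ p C ω q1 q2 Z hC1 hC2 hq1 hq2 hω1 hω2 hω3 hω4 hZ
end
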